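/- arXiv:2512.16273 — 2 statements merged into one kernel-verified Lean document; each statement's English description precedes it below -/
import Mathlib

section
/- Let P, P̂, Q, Q̂ be probability distributions on a finite set V. Define r(x) = max{0, P(x) − Q(x)}, r̂(x) = max{0, P̂(x) − Q̂(x)}, Z = ∑_x r(x), Ẑ = ∑_x r̂(x), and assume Z > 0 and Ẑ > 0. Let P'(x) = r(x)/Z and P̂'(x) = r̂(x)/Ẑ be the renormalized residual distributions. Then TV(P', P̂') ≤ (2/Z)·[TV(P, P̂) + TV(Q, Q̂)]. -/
open Finset

/-- Total variation distance between two functions on a finite type. -/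
noncomputable def TV {V : Type*} [Fintype V] (A B : V → ℝ) : ℝ :=
  (1 / 2) * ∑ v, |A v - B v|

/-- The renormalized residual distributions of speculative decoding satisfy
`TV(P', P̂') ≤ (2/Z)·[TV(P, P̂) + TV(Q, Q̂)]`. -/
theorem tv_residual_renormalized_bound {V : Type*} [Fintype V]
    (P Ph Q Qh : V → ℝ)
    (hP0 : ∀ v, 0 ≤ P v) (hP1 : ∑ v, P v = 1)
    (hPh0 : ∀ v, 0 ≤ Ph v) (hPh1 : ∑ v, Ph v = 1)
    (hQ0 : ∀ v, 0 ≤ Q v) (hQ1 : ∑ v, Q v = 1)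
    (hQh0 : ∀ v, 0 ≤ Qh v) (hQh1 : ∑ v, Qh v = 1)
    (r rh : V → ℝ) (Z Zh : ℝ)
    (hr : ∀ x, r x = max 0 (P x - Q x))
    (hrh : ∀ x, rh x = max 0 (Ph x - Qh x))
    (hZ : Z = ∑ x, r x) (hZh : Zh = ∑ x, rh x)
    (hZpos : 0 < Z) (hZhpos : 0 < Zh)
    (P' Ph' : V → ℝ)
    (hP' : ∀ x, P' x = r x / Z)
    (hPh' : ∀ x, Ph' x = rh x / Zh) :
    TV P' Ph' ≤ (2 / Z) * (TV P Ph + TV Q Qh) := by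
  have hrr : ∀ x, |r x - rh x| ≤ |P x - Ph x| + |Q x - Qh x| := by
    intro x
    rw [hr, hrh]
    calc |max 0 (P x - Q x) - max 0 (Ph x - Qh x)|
        ≤ |(P x - Q x) - (Ph x - Qh x)| := by
          rw [max_comm 0 (P x - Q x), max_comm 0 (Ph x - Qh x)]
          exact abs_max_sub_max_le_abs _ _ _
      _ = |(P x - Ph x) - (Q x - Qh x)| := by ring_nf
      _ ≤ |P x - Ph x| + |Q x - Qh x| := abs_sub _ _
  set S := ∑ x, (|P x - Ph x| + |Q x - Qh x|) with hS
  have hsum : ∑ x, |r x - rh x| ≤ S := Finset.sum_le_sum (fun x _ => hrr x)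
  have hZZ : |Zh - Z| ≤ S := by
    rw [hZ, hZh, ← Finset.sum_sub_distrib]
    calc |∑ x, (rh x - r x)| ≤ ∑ x, |rh x - r x| := Finset.abs_sum_le_sum_abs _ _
      _ = ∑ x, |r x - rh x| := by simp [abs_sub_comm]
      _ ≤ S := hsum
  have hrh0 : ∀ x, 0 ≤ rh x := fun x => by rw [hrh]; exact le_max_left _ _
  have key : ∀ x, |P' x - Ph' x| ≤ |r x - rh x| / Z + rh x * (|Zh - Z| / (Z * Zh)) := by
    intro x
    rw [hP' x, hPh' x]
    have heq : r x / Z - rh x / Zh = (r x - rh x) / Z + rh x * ((Zh - Z) / (Z * Zh)) := by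
      field_simp; ring
    rw [heq]
    calc |(r x - rh x) / Z + rh x * ((Zh - Z) / (Z * Zh))|
        ≤ |(r x - rh x) / Z| + |rh x * ((Zh - Z) / (Z * Zh))| := abs_add_le _ _
      _ = |r x - rh x| / Z + rh x * (|Zh - Z| / (Z * Zh)) := by
          rw [abs_div, abs_mul, abs_div, abs_mul,
            abs_of_pos hZpos, abs_of_pos hZhpos, abs_of_nonneg (hrh0 x)]
  have hsumkey : ∑ x, |P' x - Ph' x| ≤ S / Z + |Zh - Z| / Z := by
    calc ∑ x, |P' x - Ph' x|
        ≤ ∑ x, (|r x - rh x| / Z + rh x * (|Zh - Z| / (Z * Zh))) :=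
          Finset.sum_le_sum (fun x _ => key x)
      _ = (∑ x, |r x - rh x|) / Z + Zh * (|Zh - Z| / (Z * Zh)) := by
          rw [Finset.sum_add_distrib, ← Finset.sum_div, ← Finset.sum_mul, ← hZh]
      _ = (∑ x, |r x - rh x|) / Z + |Zh - Z| / Z := by
          congr 1
          field_simp
      _ ≤ S / Z + |Zh - Z| / Z := by
          gcongr
  have hfinal : ∑ x, |P' x - Ph' x| ≤ 2 * S / Z := by
    calc ∑ x, |P' x - Ph' x| ≤ S / Z + |Zh - Z| / Z := hsumkey
      _ ≤ S / Z + S / Z := by gcongr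
      _ = 2 * S / Z := by ring
  have hSsplit : S = ∑ v, |P v - Ph v| + ∑ v, |Q v - Qh v| := by
    rw [hS, Finset.sum_add_distrib]
  unfold TV
  rw [le_div_iff₀ hZpos] at hfinal
  have hrhs : 2 / Z * (1 / 2 * ∑ v, |P v - Ph v| + 1 / 2 * ∑ v, |Q v - Qh v|)
      = (∑ v, |P v - Ph v| + ∑ v, |Q v - Qh v|) / Z := by
    field_simp
  rw [hrhs, le_div_iff₀ hZpos, ← hSsplit]
  nlinarith [hfinal, hZpos]
end

section
/- Let P, Q be probability distributions on a finite set V and let Q̂ be any probability distribution supported on a subset V' ⊆ V obtained by truncating Q and renormalizing. If the speculative sampling verification (accept x ~ Q̂ with probability min{1, P(x)/Q̂(x)}, else resample from norm(max(0, P − Q̂))) is applied with Q̂ in place of Q on both the acceptance test and the residual, then the marginal output distribution is still exactly P. -/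
open Finset

/-!
Write `m x = min (Q̂ x) (P x)`. Accepting contributes `Q̂ x * min 1 (P x / Q̂ x) = m x`, and the
rejection mass `∑ Q̂ - ∑ m = 1 - ∑ m = ∑ P - ∑ m` equals the residual normalizer
`Z = ∑ max 0 (P - Q̂) = ∑ (P - m)`, so the resampling step contributes exactly `P x - m x`.
This works for any draft distribution `Q̂`, and truncating then renormalizing yields one.
-/

theorem mul_min_one_div_of_nonneg {p q : ℝ} (hp : 0 ≤ p) (hq : 0 ≤ q) :
    q * min 1 (p / q) = min q p := by
  rcases hq.eq_or_lt with rfl | hq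
  · simp [hp]
  · rw [mul_min_of_nonneg _ _ hq.le, mul_one, mul_div_cancel₀ _ hq.ne']

theorem max_zero_sub_eq_sub_min (p q : ℝ) : max 0 (p - q) = p - min q p := by
  rw [← max_sub_sub_left, sub_self, max_comm]

section SpeculativeSampling

variable {V : Type*} [Fintype V] {p q : V → ℝ}

theorem sum_rejection_mass_eq_sum_residual (hp0 : ∀ v, 0 ≤ p v) (hp1 : ∑ v, p v = 1)
    (hq0 : ∀ v, 0 ≤ q v) (hq1 : ∑ v, q v = 1) :
    ∑ y, q y * (1 - min 1 (p y / q y)) = ∑ y, max 0 (p y - q y) := by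
  simp only [mul_sub, mul_one, mul_min_one_div_of_nonneg (hp0 _) (hq0 _),
    max_zero_sub_eq_sub_min, sum_sub_distrib, hp1, hq1]

theorem speculative_sampling_marginal_eq (hp0 : ∀ v, 0 ≤ p v) (hp1 : ∑ v, p v = 1)
    (hq0 : ∀ v, 0 ≤ q v) (hq1 : ∑ v, q v = 1) (hZ : 0 < ∑ y, max 0 (p y - q y)) (x : V) :
    q x * min 1 (p x / q x) + (∑ y, q y * (1 - min 1 (p y / q y))) *
      (max 0 (p x - q x) / ∑ y, max 0 (p y - q y)) = p x := by
  rw [sum_rejection_mass_eq_sum_residual hp0 hp1 hq0 hq1, mul_div_cancel₀ _ hZ.ne',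
    mul_min_one_div_of_nonneg (hp0 x) (hq0 x), max_zero_sub_eq_sub_min]
  ring

end SpeculativeSampling

theorem sum_ite_mem_div_sum_eq_one {V : Type*} [Fintype V] [DecidableEq V] {Q : V → ℝ} {V' : Finset V}
    (h : ∑ v ∈ V', Q v ≠ 0) :
    ∑ v, (if v ∈ V' then Q v / ∑ w ∈ V', Q w else 0) = 1 := by
  rw [sum_ite_mem, univ_inter, ← sum_div, div_self h]

theorem tslt_lossless_general {V : Type*} [Fintype V] [DecidableEq V]
    (P Q : V → ℝ)
    (hP0 : ∀ v, 0 ≤ P v) (hP1 : ∑ v, P v = 1)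
    (hQ0 : ∀ v, 0 ≤ Q v)
    (V' : Finset V) (ρ : ℝ)
    (hρ : ρ = ∑ v ∈ V', Q v) (hρpos : 0 < ρ)
    (Qh : V → ℝ) (hQh : ∀ v, Qh v = if v ∈ V' then Q v / ρ else 0)
    (Z : ℝ) (hZ : Z = ∑ x, max 0 (P x - Qh x)) (hZpos : 0 < Z) :
    ∀ x, Qh x * min 1 (P x / Qh x) +
      (∑ y, Qh y * (1 - min 1 (P y / Qh y))) * (max 0 (P x - Qh x) / Z) = P x := by
  subst hZ hρ
  have hQh0 : ∀ v, 0 ≤ Qh v := fun v => by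
    rw [hQh]
    split_ifs
    exacts [div_nonneg (hQ0 v) hρpos.le, le_rfl]
  have hQh1 : ∑ v, Qh v = 1 := by
    simp only [hQh]
    exact sum_ite_mem_div_sum_eq_one hρpos.ne'
  exact speculative_sampling_marginal_eq hP0 hP1 hQh0 hQh1 hZpos

/-- Losslessness of TSLT: speculative sampling verification remains exact when
the draft distribution is replaced by a truncated-renormalized distribution
`Q̂` (used both in the acceptance test and in the residual). -/
theorem tslt_lossless {V : Type*} [Fintype V] [DecidableEq V]
    (P Q : V → ℝ)
    (hP0 : ∀ v, 0 ≤ P v) (hP1 : ∑ v, P v = 1)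
    (hQ0 : ∀ v, 0 ≤ Q v) (hQ1 : ∑ v, Q v = 1)
    (V' : Finset V) (ρ : ℝ)
    (hρ : ρ = ∑ v ∈ V', Q v) (hρpos : 0 < ρ)
    (Qh : V → ℝ) (hQh : ∀ v, Qh v = if v ∈ V' then Q v / ρ else 0)
    (Z : ℝ) (hZ : Z = ∑ x, max 0 (P x - Qh x)) (hZpos : 0 < Z) :
    ∀ x, Qh x * min 1 (P x / Qh x) +
      (∑ y, Qh y * (1 - min 1 (P y / Qh y))) * (max 0 (P x - Qh x) / Z) = P x :=
  tslt_lossless_general P Q hP0 hP1 hQ0 V' ρ hρ hρpos Qh hQh Z hZ hZpos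
end
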